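/- Any k rows of the generator matrix G of an (n,k) BCH-DFT code span ℂ^k; equivalently, every subframe of G consisting of at least k rows has rank k. -/

import Mathlib

open Matrix Complex Finset

/-- Entry of the (unitary) DFT matrix: `(1/√n)·exp(-2πi·j·l/n)`. -/
noncomputable def dftEntry (n j l : ℕ) : ℂ :=
  (1 / (Real.sqrt n : ℂ)) * Complex.exp (-(2 * Real.pi * Complex.I * j * l) / n)

/-- The unitary `n×n` DFT matrix `W_n`. -/
noncomputable def Wmat (n : ℕ) : Matrix (Fin n) (Fin n) ℂ :=
  Matrix.of fun j l => dftEntry n (j : ℕ) (l : ℕ)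

/-- `α = ⌈n/2⌉ - ⌊(n-k)/2⌋`. -/
def alphaBCH (n k : ℕ) : ℕ := (n + 1) / 2 - (n - k) / 2

/-- The `n×k` selection matrix `Σ` with identity blocks `I_α` (top-left) and
`I_β` (bottom-right), `β = k - α`, and zeros elsewhere. -/
def SigmaMat (n k : ℕ) : Matrix (Fin n) (Fin k) ℂ :=
  Matrix.of fun r c =>
    if ((r : ℕ) = (c : ℕ) ∧ (c : ℕ) < alphaBCH n k) ∨
       ((r : ℕ) = (c : ℕ) + (n - k) ∧ alphaBCH n k ≤ (c : ℕ)) then 1 else 0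

/-- Generator matrix `G = √(n/k)·W_nᴴ·Σ·W_k` of the `(n,k)` BCH-DFT code. -/
noncomputable def Gmat (n k : ℕ) : Matrix (Fin n) (Fin k) ℂ :=
  ((Real.sqrt ((n : ℝ) / k) : ℝ) : ℂ) • ((Wmat n)ᴴ * SigmaMat n k * Wmat k)

/-- Parity-check matrix `H`: its rows are the conjugate transposes of the `n-k`
columns of `W_nᴴ` corresponding to the zero rows `α, …, n-β-1` of `Σ`. -/
noncomputable def Hmat (n k : ℕ) : Matrix (Fin (n - k)) (Fin n) ℂ :=
  Matrix.of fun r i => dftEntry n (alphaBCH n k + (r : ℕ)) (i : ℕ)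

/-! Up to the nonzero factor `√(n/k)/√n`, row `j` of `W_nᴴ Σ` is `(ζ^(j σ(c)))_c` with
`ζ = exp(2πi/n)`, where `σ(c)` runs over the frequencies `0, …, α-1, n-β, …, n-1`. Modulo `n`
these form the window `-β, …, k-1-β` of `k` consecutive integers, so multiplying row `j` by
`ζ^(jβ)` turns any `k` rows into a Vandermonde matrix in the distinct nodes `ζ^j`, with permuted
columns. Hence every `k × k` row-submatrix of `G = √(n/k)·W_nᴴ Σ W_k` is invertible, `W_k` being
itself a Vandermonde matrix. -/

open Real

theorem det_of_pow_mul_ne_zero {R : Type*} [CommRing R] [IsDomain R] {ζ : R} {n k : ℕ}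
    (hζ : IsPrimitiveRoot ζ n) {x : Fin k → Fin n} (hx : Function.Injective x)
    {e : Fin k → ℕ} {s : ℕ} (p : Equiv.Perm (Fin k)) (he : ∀ c, e c + s ≡ p c [MOD n]) :
    (of fun a c => ζ ^ ((x a : ℕ) * e c)).det ≠ 0 := by
  have hV : (vandermonde fun a => ζ ^ (x a : ℕ)).det ≠ 0 :=
    det_vandermonde_ne_zero_iff.mpr fun a b h =>
      hx (Fin.ext (hζ.pow_inj (x a).2 (x b).2 h))
  have hshift : diagonal (fun a => ζ ^ ((x a : ℕ) * s)) * of (fun a c => ζ ^ ((x a : ℕ) * e c))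
      = (vandermonde fun a => ζ ^ (x a : ℕ)).submatrix id p := by
    ext a c
    simp only [diagonal_mul, of_apply, submatrix_apply, id, vandermonde_apply, ← pow_add,
      ← pow_mul, ← mul_add]
    exact pow_eq_pow_of_modEq (add_comm s (e c) ▸ (he c).mul_left _) hζ.pow_eq_one
  have hsign : ((Equiv.Perm.sign p : ℤ) : R) ≠ 0 := by
    rcases Int.units_eq_one_or (Equiv.Perm.sign p) with h | h <;> simp [h]
  intro h0
  have := congrArg det hshift
  rw [det_mul, h0, mul_zero, det_permute'] at this
  exact mul_ne_zero hsign hV this.symm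


theorem dftEntry_eq_inv_pow (n j l : ℕ) :
    dftEntry n j l = (Real.sqrt n : ℂ)⁻¹ * (exp (2 * π * I / n))⁻¹ ^ (j * l) := by
  rw [dftEntry, one_div, ← Complex.exp_neg, ← Complex.exp_nat_mul]
  push_cast
  ring_nf

theorem star_dftEntry (n j l : ℕ) :
    star (dftEntry n j l) = (Real.sqrt n : ℂ)⁻¹ * exp (2 * π * I / n) ^ (l * j) := by
  rw [dftEntry_eq_inv_pow, star_mul', star_inv₀, star_pow, star_inv₀, Complex.star_def,
    ← exp_conj]
  simp [mul_comm j l, neg_div, Complex.exp_neg, map_ofNat]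

theorem Wmat_eq_smul (k : ℕ) :
    Wmat k =
      (Real.sqrt k : ℂ)⁻¹ • of fun j l : Fin k => (exp (2 * π * I / k))⁻¹ ^ ((j : ℕ) * l) := by
  ext j l
  simp [Wmat, dftEntry_eq_inv_pow]

theorem det_Wmat_ne_zero {k : ℕ} (hk : k ≠ 0) : (Wmat k).det ≠ 0 := by
  rw [Wmat_eq_smul, det_smul]
  refine mul_ne_zero (pow_ne_zero _ (inv_ne_zero ?_)) ?_
  · exact_mod_cast (Real.sqrt_pos.mpr (by positivity)).ne'
  · exact det_of_pow_mul_ne_zero (isPrimitiveRoot_exp k hk).inv Function.injective_id (s := 0) 1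
      fun _ => rfl

def sigmaRow (n k : ℕ) (c : Fin k) : ℕ :=
  if (c : ℕ) < alphaBCH n k then c else c + (n - k)

theorem SigmaMat_apply (n k : ℕ) (j : Fin n) (c : Fin k) :
    SigmaMat n k j c = if (j : ℕ) = sigmaRow n k c then 1 else 0 := by
  unfold SigmaMat sigmaRow
  split_ifs <;> simp_all

theorem sigmaRow_lt {n k : ℕ} (hkn : k ≤ n) (c : Fin k) : sigmaRow n k c < n := by
  unfold sigmaRow
  split_ifs <;> omega

theorem sigmaRow_add_modEq {n k : ℕ} (hkn : k ≤ n) (c : Fin k) :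
    sigmaRow n k c + (k - alphaBCH n k) ≡ (c + (k - alphaBCH n k)) % k [MOD n] := by
  have hαk : alphaBCH n k ≤ k := by have := c.2; unfold alphaBCH; omega
  unfold sigmaRow
  split_ifs with hc
  · rw [Nat.mod_eq_of_lt (by omega)]
  · rw [Nat.mod_eq_sub_mod (by omega), Nat.mod_eq_of_lt (by omega),
      show (c : ℕ) + (n - k) + (k - alphaBCH n k) = (c + (k - alphaBCH n k) - k) + n by omega]
    exact Nat.add_mod_right _ _

theorem conjTranspose_Wmat_mul_SigmaMat_apply {n k : ℕ} (hkn : k ≤ n) (j : Fin n) (c : Fin k) :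
    ((Wmat n)ᴴ * SigmaMat n k) j c
      = (Real.sqrt n : ℂ)⁻¹ * exp (2 * π * I / n) ^ ((j : ℕ) * sigmaRow n k c) := by
  rw [mul_apply, Finset.sum_eq_single ⟨sigmaRow n k c, sigmaRow_lt hkn c⟩]
  · simp [SigmaMat_apply, Wmat, star_dftEntry]
  · intro i _ hi
    rw [SigmaMat_apply, if_neg (fun h => hi (Fin.ext h)), mul_zero]
  · simp

theorem Gmat_submatrix_eq {n k : ℕ} (hkn : k ≤ n) (f : Fin k → Fin n) :
    (Gmat n k).submatrix f id
      = ((Real.sqrt ((n : ℝ) / k) : ℂ) * (Real.sqrt n : ℂ)⁻¹) •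
        (of (fun a c => exp (2 * π * I / n) ^ ((f a : ℕ) * sigmaRow n k c)) * Wmat k) := by
  ext a l
  rw [submatrix_apply, id, Gmat, Matrix.smul_apply, Matrix.smul_apply, smul_eq_mul, smul_eq_mul,
    mul_apply, mul_apply, Finset.mul_sum, Finset.mul_sum]
  refine Finset.sum_congr rfl fun c _ => ?_
  rw [conjTranspose_Wmat_mul_SigmaMat_apply hkn, of_apply]
  ring

theorem det_Gmat_submatrix_ne_zero {n k : ℕ} (hk : k ≠ 0) (hkn : k < n) {f : Fin k → Fin n}
    (hf : Function.Injective f) : ((Gmat n k).submatrix f id).det ≠ 0 := by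
  have : NeZero k := ⟨hk⟩
  have hn : n ≠ 0 := by omega
  set β := k - alphaBCH n k
  have hshift (c : Fin k) :
      sigmaRow n k c + β ≡ (Equiv.addRight (Fin.ofNat k β) c : ℕ) [MOD n] := by
    simpa [Fin.val_add, Fin.val_ofNat, Nat.add_mod_mod] using sigmaRow_add_modEq hkn.le c
  rw [Gmat_submatrix_eq hkn.le, det_smul, det_mul]
  refine mul_ne_zero (pow_ne_zero _ (mul_ne_zero ?_ ?_))
    (mul_ne_zero (det_of_pow_mul_ne_zero (isPrimitiveRoot_exp n hn) hf _ hshift)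
      (det_Wmat_ne_zero hk))
  · exact ofReal_ne_zero.mpr (Real.sqrt_pos.mpr (div_pos (by positivity) (by positivity))).ne'
  · exact inv_ne_zero (ofReal_ne_zero.mpr (Real.sqrt_pos.mpr (by positivity)).ne')

/-- **Any `k` rows of `G` span `ℂ^k`.** Any `k` distinct rows of the generator
matrix `G` of an `(n,k)` BCH-DFT code are linearly independent (hence span `ℂ^k`). -/
theorem Gmat_rows_linearIndependent (n k : ℕ) (hk1 : 1 ≤ k) (hkn : k < n)
    (f : Fin k → Fin n) (hf : Function.Injective f) :
    LinearIndependent ℂ (fun a : Fin k => Gmat n k (f a)) := by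
  rw [show (fun a => Gmat n k (f a)) = ((Gmat n k).submatrix f id).row from rfl,
    linearIndependent_rows_iff_isUnit, isUnit_iff_isUnit_det, isUnit_iff_ne_zero]
  exact det_Gmat_submatrix_ne_zero (by omega) hkn hf
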